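/- (Theorem 2) Let G=(V,E) be a graph of convex sets with origin s and destination d, suppose there exists at least one path from s to d, let h be an admissible heuristic, and let S be a cut-set with d ∈ N_S and N_S∖{d} ≠ ∅. Then C_opt(s,d) ≥ min( R*_opt(S, N_S∖{d}), R*_opt(S, {d}) ). -/

import Mathlib

open scoped BigOperators Pointwise Classical

noncomputable section

/-- A graph of convex sets: a finite directed edge set together with a nonempty
compact convex set in `ℝ^n` attached to each vertex. -/
structure GCS (V : Type*) (n : ℕ) where
  E : Finset (V × V)
  X : V → Set (EuclideanSpace ℝ (Fin n))
  nonempty : ∀ v, (X v).Nonempty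
  compact : ∀ v, IsCompact (X v)
  convex : ∀ v, Convex ℝ (X v)

/-- The cost of a path of `k` vertices with chosen points `x 0, …, x (k-1)`. -/
def pathCost {n : ℕ} (k : ℕ) (x : ℕ → EuclideanSpace ℝ (Fin n)) : ℝ :=
  ∑ i ∈ Finset.range (k - 1), ‖x i - x (i + 1)‖

namespace GCS

variable {V : Type*} {n : ℕ}

/-- `(v 0, …, v (k-1))` is a path in `G` with chosen points `x i ∈ X (v i)`. -/
def IsPathOn (G : GCS V n) (k : ℕ) (v : ℕ → V) (x : ℕ → EuclideanSpace ℝ (Fin n)) : Prop :=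
  1 ≤ k ∧ (∀ i, i + 1 < k → (v i, v (i + 1)) ∈ G.E) ∧ ∀ i, i < k → x i ∈ G.X (v i)

/-- `C_opt(a,b)`: the infimum of path costs over all paths from `a` to `b`
and all choices of points (`⊤` if no such path exists). -/
def Copt (G : GCS V n) (a b : V) : EReal :=
  sInf {c : EReal | ∃ (k : ℕ) (v : ℕ → V) (x : ℕ → EuclideanSpace ℝ (Fin n)),
    G.IsPathOn k v x ∧ v 0 = a ∧ v (k - 1) = b ∧ c = ((pathCost k x : ℝ) : EReal)}

/-- A heuristic `h` is admissible for destination `d`. -/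
def Admissible (G : GCS V n) (d : V) (h : V → ℝ) : Prop :=
  h d = 0 ∧ ∀ v : V, (h v : EReal) ≤ G.Copt v d

/-- The neighborhood `N_S` of a set `S` of vertices. -/
def nbr [Fintype V] (G : GCS V n) (S : Finset V) : Finset V :=
  Finset.univ.filter fun v => v ∉ S ∧ ∃ u ∈ S, (u, v) ∈ G.E

/-- `C*_opt(S,S')`: the infimum over all paths starting at `s`, staying in `S` except
for the last vertex, and ending at a terminal vertex in `S'`, of the path cost plus the
heuristic value of the terminal vertex. -/
def CstarOpt (G : GCS V n) (h : V → ℝ) (s : V) (S S' : Finset V) : EReal :=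
  sInf {c : EReal | ∃ (k : ℕ) (v : ℕ → V) (x : ℕ → EuclideanSpace ℝ (Fin n)),
    G.IsPathOn k v x ∧ v 0 = s ∧ (∀ i, i < k - 1 → v i ∈ S) ∧ v (k - 1) ∈ S' ∧
    c = ((pathCost k x + h (v (k - 1)) : ℝ) : EReal)}

/-- The edge set `Ē` of the subgraph used by SPP*-GCS: edges leaving `S` into `S ∪ S'`. -/
def Ebar (G : GCS V n) (S S' : Finset V) : Finset (V × V) :=
  G.E.filter fun e => e.1 ∈ S ∧ e.2 ∈ S ∪ S'

end GCS

/-- The perspective `X̄ = {(x, λ) : λ ≥ 0, x ∈ λX}` of a set `X ⊆ ℝ^n`. -/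
def persp {n : ℕ} (X : Set (EuclideanSpace ℝ (Fin n))) :
    Set (EuclideanSpace ℝ (Fin n) × ℝ) :=
  {p | 0 ≤ p.2 ∧ p.1 ∈ p.2 • X}

namespace GCS

variable {V : Type*} {n : ℕ}

/-- Feasibility for the convex relaxation of SPP*-GCS on `(S, S')`. -/
def RelaxFeasible (G : GCS V n) (s : V) (S S' : Finset V)
    (y : V × V → ℝ) (α : V → ℝ) (z z' : V × V → EuclideanSpace ℝ (Fin n)) : Prop :=
  (∀ e ∈ G.Ebar S S', y e ∈ Set.Icc (0 : ℝ) 1) ∧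
  (∀ v ∈ S', α v ∈ Set.Icc (0 : ℝ) 1) ∧
  (∑ v ∈ S', α v) = 1 ∧
  (∑ e ∈ (G.Ebar S S').filter fun e => e.1 = s, y e) = 1 ∧
  (∀ v ∈ S', (∑ e ∈ (G.Ebar S S').filter fun e => e.2 = v, y e) = α v) ∧
  (∀ v ∈ S, v ≠ s →
    (∑ e ∈ (G.Ebar S S').filter fun e => e.2 = v, z' e)
      = (∑ e ∈ (G.Ebar S S').filter fun e => e.1 = v, z e) ∧
    (∑ e ∈ (G.Ebar S S').filter fun e => e.2 = v, y e)
      = (∑ e ∈ (G.Ebar S S').filter fun e => e.1 = v, y e)) ∧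
  (∀ e ∈ G.Ebar S S', (z e, y e) ∈ persp (G.X e.1) ∧ (z' e, y e) ∈ persp (G.X e.2))

/-- The objective of the convex relaxation of SPP*-GCS. -/
def relaxObj (G : GCS V n) (h : V → ℝ) (S S' : Finset V)
    (y : V × V → ℝ) (α : V → ℝ) (z z' : V × V → EuclideanSpace ℝ (Fin n)) : ℝ :=
  (∑ e ∈ G.Ebar S S', ‖z e - z' e‖) + ∑ v ∈ S', α v * h v

/-- `R*_opt(S,S')`: the optimal value of the convex relaxation of SPP*-GCS. -/
def RstarOpt (G : GCS V n) (h : V → ℝ) (s : V) (S S' : Finset V) : EReal :=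
  sInf {c : EReal | ∃ y α z z', G.RelaxFeasible s S S' y α z z' ∧
    c = ((G.relaxObj h S S' y α z z' : ℝ) : EReal)}

/-- The optimal value of the MICP for SPP*-GCS (the relaxation with binary `y` and `α`). -/
def MICPval (G : GCS V n) (h : V → ℝ) (s : V) (S S' : Finset V) : EReal :=
  sInf {c : EReal | ∃ y α z z', G.RelaxFeasible s S S' y α z z' ∧
    (∀ e ∈ G.Ebar S S', y e = 0 ∨ y e = 1) ∧
    (∀ v ∈ S', α v = 0 ∨ α v = 1) ∧
    c = ((G.relaxObj h S S' y α z z' : ℝ) : EReal)}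

end GCS

end

/-!
Cut the path at the first vertex `t` it visits outside `S`. By admissibility the heuristic
value `h t` is at most the cost of the remaining part of the path, so it suffices to bound
`R*_opt(S, S')` by the cost of the prefix plus `h t`, where `S'` is whichever of `{d}` and
`N_S \ {d}` contains `t`. Short-cutting the cycles of the prefix (triangle inequality) makes it a
simple path, and the indicator of its edges, with the chosen points attached, is a feasible point
of the relaxation whose objective value is exactly that cost.
-/

open Finset

theorem exists_strictMono_injOn_subchain {α : Type*} (r : α → α → Prop) (m : ℕ) (w : ℕ → α)
    (hw : ∀ i < m, r (w i) (w (i + 1))) :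
    ∃ (m' : ℕ) (φ : ℕ → ℕ), StrictMono φ ∧ φ 0 = 0 ∧ φ m' = m ∧
      (∀ i < m', r (w (φ i)) (w (φ (i + 1)))) ∧ Set.InjOn (w ∘ φ) (Set.Iio m') := by
  induction m using Nat.strong_induction_on generalizing w with
  | _ m ih =>
  by_cases hinj : Set.InjOn w (Set.Iio m)
  · exact ⟨m, id, strictMono_id, rfl, rfl, hw, hinj⟩
  obtain ⟨a, b, hab, hbm, hwab⟩ : ∃ a b, a < b ∧ b < m ∧ w a = w b := by
    simp only [Set.InjOn, Set.mem_Iio, not_forall] at hinj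
    obtain ⟨a, ha, b, hb, hwab, hne⟩ := hinj
    rcases Nat.lt_or_gt_of_ne hne with h | h
    exacts [⟨a, b, h, hb, hwab⟩, ⟨b, a, h, ha, hwab.symm⟩]
  -- skip the loop `w a, …, w b`
  set ψ : ℕ → ℕ := fun i => if i ≤ a then i else i + (b - a) with hψ
  have hψmono : StrictMono ψ := strictMono_nat_of_lt_succ fun i => by
    simp only [hψ]; split_ifs <;> omega
  have hw' : ∀ i < m - (b - a), r (w (ψ i)) (w (ψ (i + 1))) := by
    intro i hi
    simp only [hψ]
    rcases Nat.lt_trichotomy i a with h | rfl | h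
    · rw [if_pos h.le, if_pos (show i + 1 ≤ a by omega)]; exact hw i (by omega)
    · rw [if_pos le_rfl, if_neg (by omega), hwab, show i + 1 + (b - i) = b + 1 by omega]
      exact hw b hbm
    · rw [if_neg (by omega), if_neg (by omega), show i + 1 + (b - a) = i + (b - a) + 1 by omega]
      exact hw _ (by omega)
  obtain ⟨m', φ, hφ, hφ0, hφm, hr, hφinj⟩ := ih (m - (b - a)) (by omega) (w ∘ ψ) hw'
  refine ⟨m', ψ ∘ φ, hψmono.comp hφ, by simp [hφ0, hψ], ?_, hr, hφinj⟩
  simp only [Function.comp_apply, hφm, hψ]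
  rw [if_neg (by omega)]
  omega

theorem sum_norm_sub_comp_le {E : Type*} [SeminormedAddCommGroup E] (q : ℕ → E) {φ : ℕ → ℕ}
    (hφ : Monotone φ) (m : ℕ) :
    ∑ i ∈ range m, ‖q (φ i) - q (φ (i + 1))‖ ≤ ∑ i ∈ Ico (φ 0) (φ m), ‖q i - q (i + 1)‖ := by
  induction m with
  | zero => simp
  | succ m ih =>
    rw [sum_range_succ, ← sum_Ico_consecutive _ (hφ m.zero_le) (hφ m.le_succ)]
    gcongr
    simpa only [dist_eq_norm] using dist_le_Ico_sum_dist q (hφ m.le_succ)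

theorem sum_range_succ_eq_sum_range_add {M : Type*} [AddCommGroup M] (f : ℕ → M) (m : ℕ) :
    ∑ i ∈ range m, f (i + 1) = ∑ i ∈ range m, f i + (f m - f 0) := by
  rw [← sum_range_sub, ← sum_add_distrib]
  simp

theorem sum_range_ite_succ_eq {α M : Type*} [AddCommGroup M] (w : ℕ → α) (g : ℕ → M) {m : ℕ}
    {a : α} (h0 : w 0 ≠ a) (hm : w m ≠ a) :
    ∑ j ∈ range m, (if w (j + 1) = a then g (j + 1) else 0)
      = ∑ j ∈ range m, if w j = a then g j else 0 := by
  rw [sum_range_succ_eq_sum_range_add fun j => if w j = a then g j else 0, if_neg h0, if_neg hm,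
    sub_zero, add_zero]

section Spread

variable {ι β : Type*} [AddCommMonoid β]

noncomputable def spread (m : ℕ) (ed : ℕ → ι) (g : ℕ → β) (e : ι) : β :=
  ∑ j ∈ range m, if ed j = e then g j else 0

variable {m : ℕ} {ed : ℕ → ι}

theorem spread_apply_of_injOn (hed : Set.InjOn ed (Set.Iio m)) {j : ℕ} (hj : j < m)
    (g : ℕ → β) : spread m ed g (ed j) = g j := by
  rw [spread, sum_eq_single_of_mem j (mem_range.2 hj), if_pos rfl]
  intro i hi hij
  exact if_neg fun h => hij (hed (mem_range.1 hi) hj h)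

theorem spread_eq_zero {e : ι} (he : ∀ j < m, ed j ≠ e) (g : ℕ → β) : spread m ed g e = 0 :=
  sum_eq_zero fun j hj => if_neg (he j (mem_range.1 hj))

theorem sum_spread (F : Finset ι) (g : ℕ → β) :
    ∑ e ∈ F, spread m ed g e = ∑ j ∈ range m, if ed j ∈ F then g j else 0 := by
  simp only [spread]
  rw [sum_comm]
  exact sum_congr rfl fun j _ => sum_ite_eq F (ed j) fun _ => g j

theorem sum_spread_filter {F : Finset ι} (hed : ∀ j < m, ed j ∈ F) (p : ι → Prop)
    [DecidablePred p] (g : ℕ → β) :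
    ∑ e ∈ F.filter p, spread m ed g e = ∑ j ∈ range m, if p (ed j) then g j else 0 := by
  rw [sum_spread]
  refine sum_congr rfl fun j hj => ?_
  simp only [mem_filter, hed j (mem_range.1 hj), true_and]

end Spread

theorem mk_one_mem_persp {n : ℕ} {X : Set (EuclideanSpace ℝ (Fin n))}
    {x : EuclideanSpace ℝ (Fin n)} (hx : x ∈ X) : (x, (1 : ℝ)) ∈ persp X :=
  ⟨zero_le_one, by rwa [one_smul]⟩

theorem zero_mem_persp {n : ℕ} {X : Set (EuclideanSpace ℝ (Fin n))} (hX : X.Nonempty) :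
    ((0 : EuclideanSpace ℝ (Fin n)), (0 : ℝ)) ∈ persp X :=
  ⟨le_rfl, by rw [Set.zero_smul_set hX]; rfl⟩

theorem pathCost_comp_le {n : ℕ} (q : ℕ → EuclideanSpace ℝ (Fin n)) {φ : ℕ → ℕ}
    (hφ : Monotone φ) {m m' : ℕ} (hφ0 : φ 0 = 0) (hφm : φ m' = m) :
    pathCost (m' + 1) (q ∘ φ) ≤ pathCost (m + 1) q := by
  have h := sum_norm_sub_comp_le q hφ m'
  rwa [hφ0, hφm, ← range_eq_Ico] at h

theorem pathCost_eq_add {n k j : ℕ} (hj : j < k) (x : ℕ → EuclideanSpace ℝ (Fin n)) :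
    pathCost k x = pathCost (j + 1) x + pathCost (k - j) fun i => x (j + i) := by
  simp only [pathCost, show k - 1 = j + (k - j - 1) by omega, sum_range_add, Nat.add_sub_cancel,
    add_assoc]

namespace GCS

variable {V : Type*} {n : ℕ} {G : GCS V n}

theorem IsPathOn.take {k j : ℕ} {v : ℕ → V} {x : ℕ → EuclideanSpace ℝ (Fin n)}
    (hp : G.IsPathOn k v x) (hj : j < k) : G.IsPathOn (j + 1) v x :=
  ⟨by omega, fun i hi => hp.2.1 i (by omega), fun i hi => hp.2.2 i (by omega)⟩

theorem IsPathOn.drop {k j : ℕ} {v : ℕ → V} {x : ℕ → EuclideanSpace ℝ (Fin n)}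
    (hp : G.IsPathOn k v x) (hj : j < k) :
    G.IsPathOn (k - j) (fun i => v (j + i)) fun i => x (j + i) :=
  ⟨by omega, fun i hi => hp.2.1 (j + i) (by omega), fun i hi => hp.2.2 (j + i) (by omega)⟩

theorem IsPathOn.comp {m m' : ℕ} {w : ℕ → V} {q : ℕ → EuclideanSpace ℝ (Fin n)} {φ : ℕ → ℕ}
    (hp : G.IsPathOn (m + 1) w q) (hφ : Monotone φ) (hφm : φ m' = m)
    (hE : ∀ i < m', (w (φ i), w (φ (i + 1))) ∈ G.E) : G.IsPathOn (m' + 1) (w ∘ φ) (q ∘ φ) :=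
  ⟨by omega, fun i hi => hE i (by omega),
    fun i hi => hp.2.2 (φ i) (by have := hφ (Nat.le_of_lt_succ hi); omega)⟩

theorem Copt_le_pathCost {k : ℕ} {v : ℕ → V} {x : ℕ → EuclideanSpace ℝ (Fin n)}
    (hp : G.IsPathOn k v x) : G.Copt (v 0) (v (k - 1)) ≤ pathCost k x :=
  sInf_le ⟨k, v, x, hp, rfl, rfl, rfl⟩

theorem disjoint_nbr [Fintype V] (S : Finset V) : Disjoint S (G.nbr S) :=
  disjoint_right.2 fun _ hv => (mem_filter.1 hv).2.1

def pathEdge (w : ℕ → V) (j : ℕ) : V × V := (w j, w (j + 1))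

theorem injOn_pathEdge {w : ℕ → V} {I : Set ℕ} (hinj : Set.InjOn w I) :
    Set.InjOn (pathEdge w) I :=
  fun _ hi _ hj h => hinj hi hj (congrArg Prod.fst h)

section SimplePath

variable {s : V} {S S' : Finset V} {m : ℕ} {w : ℕ → V} {q : ℕ → EuclideanSpace ℝ (Fin n)}

theorem pathEdge_mem_Ebar (hp : G.IsPathOn (m + 1) w q) (hS : ∀ i < m, w i ∈ S) (hwm : w m ∈ S')
    {j : ℕ} (hj : j < m) : pathEdge w j ∈ G.Ebar S S' := by
  refine mem_filter.2 ⟨hp.2.1 j (by omega), hS j hj, ?_⟩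
  rcases Nat.lt_or_ge (j + 1) m with h | h
  · exact mem_union_left _ (hS _ h)
  · exact mem_union_right _ (show w (j + 1) ∈ S' by rwa [show j + 1 = m by omega])

theorem relaxFeasible_spread (hp : G.IsPathOn (m + 1) w q) (hs : s ∈ S) (hw0 : w 0 = s)
    (hS : ∀ i < m, w i ∈ S) (hwm : w m ∈ S') (hSS' : Disjoint S S')
    (hinj : Set.InjOn w (Set.Iio m)) :
    G.RelaxFeasible s S S' (spread m (pathEdge w) fun _ => 1) (fun v => if w m = v then 1 else 0)
      (spread m (pathEdge w) q) (spread m (pathEdge w) fun j => q (j + 1)) := by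
  have hm : 0 < m := Nat.pos_of_ne_zero fun hm0 =>
    disjoint_left.1 hSS' (hw0 ▸ hs) (by rwa [hm0] at hwm)
  have hed := injOn_pathEdge hinj
  have hmem : ∀ j < m, pathEdge w j ∈ G.Ebar S S' := fun j => pathEdge_mem_Ebar hp hS hwm
  have hvS' : ∀ v ∈ S', v ∉ S := fun v hv hvS => disjoint_left.1 hSS' hvS hv
  refine ⟨fun e _ => ?_, fun v _ => ?_, ?_, ?_, fun v hv => ?_, fun v hv hvs => ⟨?_, ?_⟩,
    fun e _ => ?_⟩
  · by_cases he : ∃ j < m, pathEdge w j = e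
    · obtain ⟨j, hj, rfl⟩ := he
      simp [spread_apply_of_injOn hed hj]
    · push Not at he
      simp [spread_eq_zero he]
  · dsimp only
    split_ifs <;> simp
  · rw [sum_ite_eq, if_pos hwm]
  · rw [sum_spread_filter hmem, sum_eq_single_of_mem 0 (mem_range.2 hm),
      if_pos (show (pathEdge w 0).1 = s from hw0)]
    intro j hj hj0
    exact if_neg fun h => hj0 (hinj (mem_range.1 hj) hm (h.trans hw0.symm))
  · rw [sum_spread_filter hmem]
    refine (sum_range_succ_eq_sum_range_add (fun j => if w j = v then (1 : ℝ) else 0) m).trans ?_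
    rw [if_neg fun (h : w 0 = v) => hvS' v hv (h ▸ hw0 ▸ hs),
      sum_eq_zero fun j hj => if_neg fun (h : w j = v) => hvS' v hv (h ▸ hS j (mem_range.1 hj))]
    simp
  · rw [sum_spread_filter hmem, sum_spread_filter hmem]
    exact sum_range_ite_succ_eq w (fun j => q j) (hw0 ▸ Ne.symm hvs) fun h => hvS' _ hwm (h ▸ hv)
  · rw [sum_spread_filter hmem, sum_spread_filter hmem]
    exact sum_range_ite_succ_eq w (fun _ => (1 : ℝ)) (hw0 ▸ Ne.symm hvs)
      fun h => hvS' _ hwm (h ▸ hv)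
  · by_cases he : ∃ j < m, pathEdge w j = e
    · obtain ⟨j, hj, rfl⟩ := he
      simp only [spread_apply_of_injOn hed hj]
      exact ⟨mk_one_mem_persp (hp.2.2 j (by omega)), mk_one_mem_persp (hp.2.2 (j + 1) (by omega))⟩
    · push Not at he
      simp only [spread_eq_zero he]
      exact ⟨zero_mem_persp (G.nonempty _), zero_mem_persp (G.nonempty _)⟩

theorem relaxObj_spread (hp : G.IsPathOn (m + 1) w q) (hS : ∀ i < m, w i ∈ S) (hwm : w m ∈ S')
    (hinj : Set.InjOn w (Set.Iio m)) (h : V → ℝ) :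
    G.relaxObj h S S' (spread m (pathEdge w) fun _ => 1) (fun v => if w m = v then 1 else 0)
      (spread m (pathEdge w) q) (spread m (pathEdge w) fun j => q (j + 1))
      = pathCost (m + 1) q + h (w m) := by
  have hed := injOn_pathEdge hinj
  have hnorm : ∀ e, ‖spread m (pathEdge w) q e - spread m (pathEdge w) (fun j => q (j + 1)) e‖
      = spread m (pathEdge w) (fun j => ‖q j - q (j + 1)‖) e := fun e => by
    by_cases he : ∃ j < m, pathEdge w j = e
    · obtain ⟨j, hj, rfl⟩ := he
      simp only [spread_apply_of_injOn hed hj]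
    · push Not at he
      simp only [spread_eq_zero he, sub_zero, norm_zero]
  simp only [relaxObj, hnorm, sum_spread, ite_mul, one_mul, zero_mul, sum_ite_eq, if_pos hwm]
  congr 1
  exact sum_congr rfl fun j hj => if_pos (pathEdge_mem_Ebar hp hS hwm (mem_range.1 hj))

theorem RstarOpt_le_of_injOn (hp : G.IsPathOn (m + 1) w q) (hs : s ∈ S) (hw0 : w 0 = s)
    (hS : ∀ i < m, w i ∈ S) (hwm : w m ∈ S') (hSS' : Disjoint S S')
    (hinj : Set.InjOn w (Set.Iio m)) (h : V → ℝ) :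
    G.RstarOpt h s S S' ≤ ((pathCost (m + 1) q + h (w m) : ℝ) : EReal) :=
  sInf_le ⟨_, _, _, _, relaxFeasible_spread hp hs hw0 hS hwm hSS' hinj,
    by rw [relaxObj_spread hp hS hwm hinj]⟩

theorem RstarOpt_le_of_isPathOn (hp : G.IsPathOn (m + 1) w q) (hs : s ∈ S) (hw0 : w 0 = s)
    (hS : ∀ i < m, w i ∈ S) (hwm : w m ∈ S') (hSS' : Disjoint S S') (h : V → ℝ) :
    G.RstarOpt h s S S' ≤ ((pathCost (m + 1) q + h (w m) : ℝ) : EReal) := by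
  obtain ⟨m', φ, hφ, hφ0, hφm, hE, hinj⟩ :=
    exists_strictMono_injOn_subchain (fun a b => (a, b) ∈ G.E) m w fun i hi => hp.2.1 i (by omega)
  calc G.RstarOpt h s S S'
      ≤ ((pathCost (m' + 1) (q ∘ φ) + h ((w ∘ φ) m') : ℝ) : EReal) :=
        RstarOpt_le_of_injOn (hp.comp hφ.monotone hφm hE) hs (by simp [hφ0, hw0])
          (fun i hi => hS _ (hφm ▸ hφ hi)) (by simpa [hφm] using hwm) hSS' hinj h
    _ ≤ ((pathCost (m + 1) q + h (w m) : ℝ) : EReal) := by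
        rw [Function.comp_apply, hφm]
        exact EReal.coe_le_coe (by gcongr; exact pathCost_comp_le q hφ.monotone hφ0 hφm)

end SimplePath

theorem RstarOpt_le_pathCost_of_exit {s d : V} {h : V → ℝ} (hadm : G.Admissible d h)
    {S S' : Finset V} {k j : ℕ} {v : ℕ → V} {x : ℕ → EuclideanSpace ℝ (Fin n)}
    (hp : G.IsPathOn k v x) (hs : s ∈ S) (hv0 : v 0 = s) (hvk : v (k - 1) = d) (hj : j < k)
    (hS : ∀ i < j, v i ∈ S) (hvj : v j ∈ S') (hSS' : Disjoint S S') :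
    G.RstarOpt h s S S' ≤ pathCost k x := by
  have hsuffix : h (v j) ≤ pathCost (k - j) fun i => x (j + i) := by
    have hcopt := Copt_le_pathCost (hp.drop hj)
    rw [add_zero, show j + (k - j - 1) = k - 1 by omega, hvk] at hcopt
    exact_mod_cast (hadm.2 (v j)).trans hcopt
  calc G.RstarOpt h s S S' ≤ ((pathCost (j + 1) x + h (v j) : ℝ) : EReal) :=
        RstarOpt_le_of_isPathOn (hp.take hj) hs hv0 hS hvj hSS' h
    _ ≤ pathCost k x := by
        rw [pathCost_eq_add hj x]
        exact EReal.coe_le_coe (by gcongr)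

end GCS

theorem stmt7_general {V : Type*} [Fintype V] {n : ℕ} (G : GCS V n) (s d : V) (h : V → ℝ)
    (hadm : G.Admissible d h)
    (S : Finset V) (hs : s ∈ S) (hd : d ∉ S) :
    min (G.RstarOpt h s S (G.nbr S \ {d})) (G.RstarOpt h s S {d}) ≤ G.Copt s d := by
  refine le_sInf ?_
  rintro c ⟨k, v, x, hp, hv0, hvk, rfl⟩
  have hexit : ∃ i, v i ∉ S := ⟨k - 1, hvk ▸ hd⟩
  set j := Nat.find hexit
  have hjS : v j ∉ S := Nat.find_spec hexit
  have hS : ∀ i < j, v i ∈ S := fun i hi => not_not.1 (Nat.find_min hexit hi)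
  have hjk : j < k := (Nat.find_le (hvk ▸ hd)).trans_lt (by have := hp.1; omega)
  have hbound := fun S' hvj hSS' =>
    GCS.RstarOpt_le_pathCost_of_exit (S' := S') hadm hp hs hv0 hvk hjk hS hvj hSS'
  by_cases hjd : v j = d
  · exact (min_le_right _ _).trans
      (hbound _ (mem_singleton.2 hjd) (disjoint_singleton_right.2 hd))
  · have hj0 : j ≠ 0 := fun hj0 => hjS (hj0 ▸ hv0 ▸ hs)
    have hjN : v j ∈ G.nbr S := mem_filter.2 ⟨mem_univ _, hjS, v (j - 1), hS _ (by omega),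
      by simpa [Nat.sub_add_cancel (Nat.pos_of_ne_zero hj0)] using hp.2.1 (j - 1) (by omega)⟩
    exact (min_le_left _ _).trans (hbound _ (mem_sdiff.2 ⟨hjN, by simpa using hjd⟩)
      ((G.disjoint_nbr S).mono_right sdiff_subset))

/-- Theorem 2: For a cut-set `S` with `d ∈ N_S` and `N_S \ {d} ≠ ∅`,
`C_opt(s,d) ≥ min(R*_opt(S, N_S \ {d}), R*_opt(S, {d}))`. -/
theorem stmt7 {V : Type*} [Fintype V] {n : ℕ} (G : GCS V n) (s d : V) (h : V → ℝ)
    (hadm : G.Admissible d h)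
    (hpath : ∃ (k : ℕ) (v : ℕ → V) (x : ℕ → EuclideanSpace ℝ (Fin n)),
      G.IsPathOn k v x ∧ v 0 = s ∧ v (k - 1) = d)
    (S : Finset V) (hs : s ∈ S) (hd : d ∉ S)
    (hdN : d ∈ G.nbr S) (hne : (G.nbr S \ {d}).Nonempty) :
    min (G.RstarOpt h s S (G.nbr S \ {d})) (G.RstarOpt h s S {d}) ≤ G.Copt s d :=
  stmt7_general G s d h hadm S hs hd
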